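/- arXiv:2402.01377 — 3 statements merged into one kernel-verified Lean document; each statement's English description precedes it below -/
import Mathlib

section
/- For a classical unilateral or bilateral weighted backward shift $B_{\boldsymbol{\lambda}}$ on $\ell^2(\mathbb{N})$ or $\ell^2(\mathbb{Z})$ with nonzero bounded weights, the set $CR(B_{\boldsymbol{\lambda}})$ is either $\{0\}$ or the whole space; consequently the restriction $B_{\boldsymbol{\lambda}}\vert_{CR(B_{\boldsymbol{\lambda}})}$ is always a chain recurrent operator and $CR(B_{\boldsymbol{\lambda}}\vert_{CR(B_{\boldsymbol{\lambda}})}) = CR(B_{\boldsymbol{\lambda}})$. -/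
set_option maxHeartbeats 2000000


/-- A δ-chain for `T` from `f` to `g`: a finite sequence `(u l)_{l=0}^m`, `m ≥ 1`,
with `u 0 = f`, `u m = g`, and `‖u l - T (u (l-1))‖ < δ` for `1 ≤ l ≤ m`. -/
def IsDeltaChain {X : Type*} [NormedAddCommGroup X] [NormedSpace ℂ X]
    (T : X →L[ℂ] X) (δ : ℝ) (f g : X) : Prop :=
  ∃ (m : ℕ) (u : ℕ → X), 1 ≤ m ∧ u 0 = f ∧ u m = g ∧
    ∀ l, 1 ≤ l → l ≤ m → ‖u l - T (u (l - 1))‖ < δ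

/-- `f` is a chain recurrent vector for `T`. -/
def ChainRecVec {X : Type*} [NormedAddCommGroup X] [NormedSpace ℂ X]
    (T : X →L[ℂ] X) (f : X) : Prop :=
  ∀ δ : ℝ, 0 < δ → IsDeltaChain T δ f f

/-- `f` is chain recurrent for the restriction of `T` to the subset `S`
(all points of the chain are required to lie in `S`). -/
def RelChainRecVec {X : Type*} [NormedAddCommGroup X] [NormedSpace ℂ X]
    (T : X →L[ℂ] X) (S : Set X) (f : X) : Prop :=
  ∀ δ : ℝ, 0 < δ → ∃ (m : ℕ) (u : ℕ → X), 1 ≤ m ∧ (∀ l ≤ m, u l ∈ S) ∧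
    u 0 = f ∧ u m = f ∧ ∀ l, 1 ≤ l → l ≤ m → ‖u l - T (u (l - 1))‖ < δ

open scoped ENNReal

section General
variable {X : Type*} [NormedAddCommGroup X] [NormedSpace ℂ X] (T : X →L[ℂ] X)

/-- chain with a prescribed length -/
def DChain (δ : ℝ) (f g : X) (m : ℕ) : Prop :=
  ∃ u : ℕ → X, u 0 = f ∧ u m = g ∧ ∀ l, 1 ≤ l → l ≤ m → ‖u l - T (u (l - 1))‖ < δ

variable {T}

lemma isDeltaChain_iff {δ : ℝ} {f g : X} :
    IsDeltaChain T δ f g ↔ ∃ m, 1 ≤ m ∧ DChain T δ f g m := by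
  constructor
  · rintro ⟨m, u, hm, h0, hm', he⟩; exact ⟨m, hm, u, h0, hm', he⟩
  · rintro ⟨m, hm, u, h0, hm', he⟩; exact ⟨m, u, hm, h0, hm', he⟩

lemma dchain_zero {δ : ℝ} (hδ : 0 < δ) (m : ℕ) : DChain T δ (0 : X) 0 m := by
  refine ⟨fun _ => 0, rfl, rfl, fun l _ _ => ?_⟩
  simp [hδ]

lemma dchain_concat {δ : ℝ} {f g h : X} {m m' : ℕ}
    (h1 : DChain T δ f g m) (h2 : DChain T δ g h m') : DChain T δ f h (m + m') := by
  obtain ⟨u, hu0, hum, hue⟩ := h1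
  obtain ⟨v, hv0, hvm, hve⟩ := h2
  refine ⟨fun l => if l ≤ m then u l else v (l - m), by simp only []; rw [if_pos (Nat.zero_le m)]; exact hu0, ?_, ?_⟩
  · by_cases h' : m' = 0
    · subst h'
      simp only [Nat.add_zero]
      rw [if_pos (le_refl m), hum, ← hv0, hvm]
    · have hnle : ¬ (m + m' ≤ m) := by omega
      simp only [hnle, if_false, Nat.add_sub_cancel_left, hvm]
  · intro l hl1 hlm
    by_cases hc : l ≤ m
    · have hc' : l - 1 ≤ m := by omega
      simpa [hc, hc'] using hue l hl1 hc
    · have hj1 : 1 ≤ l - m := by omega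
      have hj2 : l - m ≤ m' := by omega
      have he := hve (l - m) hj1 hj2
      have h1' : ¬ (l ≤ m) := hc
      by_cases hd : l - 1 ≤ m
      · have : l = m + 1 := by omega
        subst this
        simpa [h1', hd, hum, hv0] using he
      · have e1 : l - m - 1 = l - 1 - m := by omega
        simpa [h1', hd, e1] using he

lemma dchain_iterate {δ : ℝ} {f : X} {m : ℕ} (hm : 1 ≤ m) (h : DChain T δ f f m) :
    ∀ k, DChain T δ f f ((k + 1) * m) := by
  intro k
  induction k with
  | zero => simpa using h
  | succ k ih =>
      have := dchain_concat ih h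
      simpa [add_mul, one_mul] using this

lemma dchain_add {δ₁ δ₂ : ℝ} {f g f' g' : X} {m : ℕ}
    (h1 : DChain T δ₁ f g m) (h2 : DChain T δ₂ f' g' m) :
    DChain T (δ₁ + δ₂) (f + f') (g + g') m := by
  obtain ⟨u, hu0, hum, hue⟩ := h1
  obtain ⟨v, hv0, hvm, hve⟩ := h2
  refine ⟨fun l => u l + v l, by simp only []; rw [hu0, hv0], by simp only []; rw [hum, hvm], fun l hl1 hlm => ?_⟩
  have : u l + v l - T (u (l - 1) + v (l - 1)) =
      (u l - T (u (l - 1))) + (v l - T (v (l - 1))) := by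
    rw [map_add]; abel
  rw [this]
  calc ‖(u l - T (u (l - 1))) + (v l - T (v (l - 1)))‖
      ≤ ‖u l - T (u (l - 1))‖ + ‖v l - T (v (l - 1))‖ := norm_add_le _ _
    _ < δ₁ + δ₂ := add_lt_add (hue l hl1 hlm) (hve l hl1 hlm)

lemma dchain_smul {δ δ' : ℝ} (hδ' : 0 < δ') {f g : X} {m : ℕ} (c : ℂ)
    (hc : ‖c‖ * δ ≤ δ') (h : DChain T δ f g m) : DChain T δ' (c • f) (c • g) m := by
  obtain ⟨u, hu0, hum, hue⟩ := h
  refine ⟨fun l => c • u l, by simp only []; rw [hu0], by simp only []; rw [hum], fun l hl1 hlm => ?_⟩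
  have : c • u l - T (c • u (l - 1)) = c • (u l - T (u (l - 1))) := by
    rw [map_smul]; rw [smul_sub]
  rw [this, norm_smul]
  rcases eq_or_ne c 0 with rfl | hc0
  · simpa using hδ'
  · have : ‖c‖ * ‖u l - T (u (l - 1))‖ < ‖c‖ * δ :=
      mul_lt_mul_of_pos_left (hue l hl1 hlm) (norm_pos_iff.mpr hc0)
    linarith

lemma chainRecVec_zero : ChainRecVec T (0 : X) := by
  intro δ hδ
  exact isDeltaChain_iff.mpr ⟨1, le_refl 1, dchain_zero hδ 1⟩

lemma chainRecVec_add {f g : X} (hf : ChainRecVec T f) (hg : ChainRecVec T g) :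
    ChainRecVec T (f + g) := by
  intro δ hδ
  obtain ⟨m, u, hm, hu0, hum, hue⟩ := hf (δ / 2) (by positivity)
  obtain ⟨m', v, hm', hv0, hvm, hve⟩ := hg (δ / 2) (by positivity)
  have c1 : DChain T (δ / 2) f f (m' * m) := by
    have := dchain_iterate hm ⟨u, hu0, hum, hue⟩ (m' - 1)
    rwa [Nat.sub_add_cancel hm'] at this
  have c2 : DChain T (δ / 2) g g (m * m') := by
    have := dchain_iterate hm' ⟨v, hv0, hvm, hve⟩ (m - 1)
    rwa [Nat.sub_add_cancel hm] at this
  rw [mul_comm] at c1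
  have := dchain_add c1 c2
  rw [add_halves] at this
  exact isDeltaChain_iff.mpr ⟨m * m', Nat.one_le_iff_ne_zero.mpr (by positivity), this⟩

lemma chainRecVec_smul {f : X} (c : ℂ) (hf : ChainRecVec T f) :
    ChainRecVec T (c • f) := by
  intro δ hδ
  obtain ⟨m, hm, hc⟩ := isDeltaChain_iff.mp (hf (δ / (‖c‖ + 1)) (by positivity))
  refine isDeltaChain_iff.mpr ⟨m, hm, dchain_smul hδ c ?_ hc⟩
  rw [div_eq_inv_mul, ← mul_assoc]
  have h1 : ‖c‖ * (‖c‖ + 1)⁻¹ ≤ 1 := by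
    rw [mul_inv_le_iff₀ (by positivity), one_mul]; linarith
  nlinarith [norm_nonneg c, hδ.le]

lemma chainRecVec_closure {f : X}
    (h : ∀ ε : ℝ, 0 < ε → ∃ g : X, ChainRecVec T g ∧ ‖f - g‖ < ε) :
    ChainRecVec T f := by
  intro δ hδ
  obtain ⟨g, hg, hfg⟩ := h (δ / (2 * (1 + ‖T‖))) (by positivity)
  obtain ⟨m, u, hm, hu0, hum, hue⟩ := hg (δ / 2) (by positivity)
  set w : ℕ → X := fun l => u l + (if l = 0 ∨ l = m then f - g else 0) with hw
  have hw0 : w 0 = f := by simp [hw, hu0]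
  have hwm : w m = f := by simp [hw, hum]
  refine isDeltaChain_iff.mpr ⟨m, hm, w, hw0, hwm, fun l hl1 hlm => ?_⟩
  have key : w l - T (w (l - 1)) = (u l - T (u (l - 1)))
      + ((if l = 0 ∨ l = m then f - g else 0) - T (if l - 1 = 0 ∨ l - 1 = m then f - g else 0)) := by
    simp only [hw, map_add]; abel
  rw [key]
  have hTf : ∀ x : X, ‖T x‖ ≤ ‖T‖ * ‖x‖ := fun x => T.le_opNorm x
  have h2 : ‖(if l = 0 ∨ l = m then f - g else 0) -
      T (if l - 1 = 0 ∨ l - 1 = m then f - g else 0)‖ ≤ (1 + ‖T‖) * ‖f - g‖ := by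
    calc ‖(if l = 0 ∨ l = m then f - g else 0) -
        T (if l - 1 = 0 ∨ l - 1 = m then f - g else 0)‖
        ≤ ‖(if l = 0 ∨ l = m then f - g else 0)‖ +
          ‖T (if l - 1 = 0 ∨ l - 1 = m then f - g else 0)‖ := norm_sub_le _ _
      _ ≤ ‖f - g‖ + ‖T‖ * ‖f - g‖ := by
          gcongr
          · split
            · exact le_refl _
            · simp [norm_nonneg]
          · refine (hTf _).trans ?_
            gcongr
            split
            · exact le_refl _
            · simp [norm_nonneg]
      _ = (1 + ‖T‖) * ‖f - g‖ := by ring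
  have h3 : (1 + ‖T‖) * ‖f - g‖ < (1 + ‖T‖) * (δ / (2 * (1 + ‖T‖))) := by
    have hT0 : (0:ℝ) < 1 + ‖T‖ := by positivity
    exact mul_lt_mul_of_pos_left hfg hT0
  have h4 : (1 + ‖T‖) * (δ / (2 * (1 + ‖T‖))) = δ / 2 := by
    field_simp
  calc ‖(u l - T (u (l - 1))) + _‖ ≤ ‖u l - T (u (l-1))‖ + _ := norm_add_le _ _
    _ < δ / 2 + δ / 2 := by
        refine add_lt_add (hue l hl1 hlm) ?_
        exact lt_of_le_of_lt h2 (h3.trans_eq h4)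
    _ = δ := add_halves δ

lemma chainRecVec_of_to_from_zero {f : X}
    (h1 : ∀ δ : ℝ, 0 < δ → ∃ m, 1 ≤ m ∧ DChain T δ f 0 m)
    (h2 : ∀ δ : ℝ, 0 < δ → ∃ m, 1 ≤ m ∧ DChain T δ 0 f m) :
    ChainRecVec T f := by
  intro δ hδ
  obtain ⟨m, hm, hc1⟩ := h1 δ hδ
  obtain ⟨m', hm', hc2⟩ := h2 δ hδ
  exact isDeltaChain_iff.mpr ⟨m + m', by omega, dchain_concat hc1 hc2⟩

lemma chainRecVec_large {f : X} (hf : ChainRecVec T f) {δ : ℝ} (hδ : 0 < δ) (M : ℕ) :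
    ∃ m, M ≤ m ∧ 1 ≤ m ∧ DChain T δ f f m := by
  obtain ⟨m, hm, hc⟩ := isDeltaChain_iff.mp (hf δ hδ)
  refine ⟨(M + 1) * m, ?_, ?_, ?_⟩
  · calc M ≤ M + 1 := by omega
      _ ≤ (M + 1) * m := Nat.le_mul_of_pos_right _ hm
  · exact Nat.one_le_iff_ne_zero.mpr (Nat.mul_ne_zero (by omega) (by omega))
  · have := dchain_iterate hm hc M
    exact this

end General
open scoped ENNReal

section ShiftGeneric
variable {ι : Type*} [DecidableEq ι] (s : ι → ι) (w b : ι → ℂ)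
variable (B : lp (fun _ : ι => ℂ) 2 →L[ℂ] lp (fun _ : ι => ℂ) 2)
variable (hB : ∀ (f : lp (fun _ : ι => ℂ) 2) (n : ι), (B f) n = w n * f (s n))

-- coordinate estimate along a chain
include hB in
lemma shift_coord (hrel : ∀ n, b (s n) = b n * w n)
    {δ : ℝ} {m : ℕ} {u : ℕ → lp (fun _ : ι => ℂ) 2}
    (hue : ∀ l, 1 ≤ l → l ≤ m → ‖u l - B (u (l - 1))‖ < δ) :
    ∀ l, l ≤ m → ∀ k, ‖b k * u l k - b (s^[l] k) * u 0 (s^[l] k)‖ ≤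
      δ * ∑ i ∈ Finset.range l, ‖b (s^[i] k)‖ := by
  intro l
  induction l with
  | zero => intro _ k; simp
  | succ l ih =>
    intro hlm k
    have hl' : l ≤ m := by omega
    have hε : ‖u (l + 1) - B (u l)‖ < δ := by
      have := hue (l + 1) (by omega) hlm
      simpa using this
    have hεk : ‖(u (l + 1)) k - w k * (u l) (s k)‖ < δ := by
      have h1 : (u (l + 1)) k - w k * (u l) (s k) = (u (l + 1) - B (u l)) k := by
        rw [lp.coeFn_sub, Pi.sub_apply, hB]
      rw [h1]
      exact lt_of_le_of_lt (lp.norm_apply_le_norm (by norm_num) _ k) hε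
    have key : b k * u (l + 1) k - b (s^[l + 1] k) * u 0 (s^[l + 1] k)
        = b k * ((u (l + 1)) k - w k * (u l) (s k))
          + (b (s k) * (u l) (s k) - b (s^[l] (s k)) * u 0 (s^[l] (s k))) := by
      rw [Function.iterate_succ_apply, hrel]
      ring
    rw [key]
    calc ‖b k * ((u (l + 1)) k - w k * (u l) (s k))
          + (b (s k) * (u l) (s k) - b (s^[l] (s k)) * u 0 (s^[l] (s k)))‖
        ≤ ‖b k * ((u (l + 1)) k - w k * (u l) (s k))‖
          + ‖b (s k) * (u l) (s k) - b (s^[l] (s k)) * u 0 (s^[l] (s k))‖ := norm_add_le _ _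
      _ ≤ ‖b k‖ * δ + δ * ∑ i ∈ Finset.range l, ‖b (s^[i] (s k))‖ := by
          gcongr
          · rw [norm_mul]
            exact mul_le_mul_of_nonneg_left hεk.le (norm_nonneg _)
          · exact ih hl' (s k)
      _ = δ * ∑ i ∈ Finset.range (l + 1), ‖b (s^[i] k)‖ := by
          rw [Finset.sum_range_succ']
          simp only [Function.iterate_succ_apply, Function.iterate_zero_apply]
          ring

include hB in
lemma B_single (hs : Function.Injective s) (c : ℂ) (j : ι) :
    B (c • lp.single 2 (s j) 1) = (c * w j) • lp.single 2 j (1 : ℂ) := by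
  apply lp.ext
  funext k
  rw [hB]
  rw [lp.coeFn_smul, Pi.smul_apply, lp.coeFn_smul, Pi.smul_apply]
  by_cases hk : k = j
  · subst hk
    rw [lp.single_apply_self, lp.single_apply_self]
    simp only [smul_eq_mul]
    ring
  · rw [lp.single_apply_ne 2 j _ hk, lp.single_apply_ne 2 (s j) _ (fun h => hk (hs h))]
    simp

include hB in
lemma B_single_kill (c : ℂ) (j : ι) (hj : ∀ i, s i ≠ j) :
    B (c • lp.single 2 j 1) = 0 := by
  apply lp.ext
  funext k
  rw [hB]
  rw [lp.coeFn_smul, Pi.smul_apply, lp.single_apply_ne 2 j _ (hj k)]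
  simp

lemma norm_smul_single (c : ℂ) (j : ι) :
    ‖c • (lp.single 2 j (1 : ℂ) : lp (fun _ : ι => ℂ) 2)‖ = ‖c‖ := by
  rw [norm_smul]
  have h2 : (0:ℝ) < (2 : ℝ≥0∞).toReal := by norm_num
  have h1 : ‖(lp.single 2 j (1 : ℂ) : lp (fun _ : ι => ℂ) 2)‖ = ‖(1 : ℂ)‖ :=
    lp.norm_single (E := fun _ : ι => ℂ) (p := 2) (by norm_num) j (1 : ℂ)
  rw [h1, norm_one, mul_one]

lemma single_eq_smul (j : ι) (a : ℂ) :
    (lp.single 2 j a : lp (fun _ : ι => ℂ) 2) = a • lp.single 2 j (1 : ℂ) := by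
  rw [← lp.single_smul]
  simp

end ShiftGeneric

section ShiftGeneric2
variable {ι : Type*} [DecidableEq ι] (s : ι → ι) (w b : ι → ℂ)
variable {B : lp (fun _ : ι => ℂ) 2 →L[ℂ] lp (fun _ : ι => ℂ) 2}
variable (hB : ∀ (f : lp (fun _ : ι => ℂ) 2) (n : ι), (B f) n = w n * f (s n))

set_option maxHeartbeats 1000000 in
include hB in
lemma dchain_of_singles (hs : Function.Injective s) {m : ℕ} (k : ℕ → ι) (γ : ℕ → ℂ) {δ : ℝ}
    (hk : ∀ l, 1 ≤ l → l ≤ m → s (k l) = k (l - 1))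
    (hε : ∀ l, 1 ≤ l → l ≤ m → ‖γ l - γ (l - 1) * w (k l)‖ < δ) :
    DChain B δ (γ 0 • lp.single 2 (k 0) 1) (γ m • lp.single 2 (k m) 1) m := by
  refine ⟨fun l => γ l • lp.single 2 (k l) 1, rfl, rfl, fun l hl1 hlm => ?_⟩
  have h1 : B (γ (l - 1) • (lp.single 2 (k (l - 1)) 1 : lp (fun _ : ι => ℂ) 2))
      = (γ (l - 1) * w (k l)) • lp.single 2 (k l) (1 : ℂ) := by
    rw [← hk l hl1 hlm]
    exact B_single s w B hB hs _ _
  simp only [h1]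
  rw [← sub_smul, norm_smul_single]
  exact hε l hl1 hlm

end ShiftGeneric2

section ShiftGeneric3
variable {ι : Type*} [DecidableEq ι] (s : ι → ι) (w b : ι → ℂ)
variable {B : lp (fun _ : ι => ℂ) 2 →L[ℂ] lp (fun _ : ι => ℂ) 2}
variable (hB : ∀ (f : lp (fun _ : ι => ℂ) 2) (n : ι), (B f) n = w n * f (s n))

include hB in
lemma chain_zero_to_single (hs : Function.Injective s) (hrel : ∀ n, b (s n) = b n * w n)
    (hb : ∀ n, b n ≠ 0) (n : ι)
    (hdiv : ∀ C : ℝ, ∃ m, 1 ≤ m ∧ C < ∑ j ∈ Finset.range m, ‖b (s^[j] n)‖) :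
    ∀ δ : ℝ, 0 < δ → ∃ m, 1 ≤ m ∧ DChain B δ 0 (lp.single 2 n 1) m := by
  intro δ hδ
  obtain ⟨m, hm1, hmS⟩ := hdiv (‖b n‖ / δ)
  set S : ℝ := ∑ j ∈ Finset.range m, ‖b (s^[j] n)‖ with hS
  have hSpos : 0 < S := lt_of_le_of_lt (by positivity) hmS
  set k : ℕ → ι := fun l => s^[m - l] n with hk
  set T : ℕ → ℝ := fun l => ∑ j ∈ Finset.range l, ‖b (s^[m - 1 - j] n)‖ with hT
  set γ : ℕ → ℂ := fun l => ((T l / S : ℝ) : ℂ) * (b n / b (k l)) with hγ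
  have hkrel : ∀ l, 1 ≤ l → l ≤ m → s (k l) = k (l - 1) := by
    intro l h1 h2
    have h3 : s (s^[m - l] n) = s^[(m - l) + 1] n := (Function.iterate_succ_apply' s _ n).symm
    show s (s^[m - l] n) = s^[m - (l - 1)] n
    rw [h3]
    congr 1
    omega
  have hγε : ∀ l, 1 ≤ l → l ≤ m → ‖γ l - γ (l - 1) * w (k l)‖ < δ := by
    intro l h1 h2
    have hbk : b (k l) ≠ 0 := hb _
    have hbkpos : (0:ℝ) < ‖b (k l)‖ := norm_pos_iff.mpr hbk
    have hwrel : b (k (l - 1)) = b (k l) * w (k l) := by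
      rw [← hkrel l h1 h2]; exact hrel _
    have hwne : w (k l) ≠ 0 := by
      intro h; apply hb (k (l - 1)); rw [hwrel, h, mul_zero]
    have e1 : γ (l - 1) * w (k l) = ((T (l - 1) / S : ℝ) : ℂ) * (b n / b (k l)) := by
      show ((T (l-1) / S : ℝ) : ℂ) * (b n / b (k (l-1))) * w (k l) = _
      rw [hwrel]
      rw [mul_assoc, div_mul_eq_mul_div, mul_comm (b n) (w (k l)),
        mul_comm (b (k l)) (w (k l)), mul_div_mul_left _ _ hwne]
    have e2 : T l = T (l - 1) + ‖b (k l)‖ := by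
      show ∑ j ∈ Finset.range l, ‖b (s^[m - 1 - j] n)‖ = _
      have h3 : l = (l - 1) + 1 := by omega
      rw [h3, Finset.sum_range_succ]
      have h4 : m - 1 - (l - 1) = m - ((l - 1) + 1) := by omega
      rw [h4]
      rfl
    have e3 : γ l - γ (l - 1) * w (k l) = ((‖b (k l)‖ / S : ℝ) : ℂ) * (b n / b (k l)) := by
      rw [e1]
      show ((T l / S : ℝ) : ℂ) * (b n / b (k l)) - _ = _
      rw [e2]
      push_cast
      ring
    rw [e3, norm_mul, norm_div]
    have h4 : ‖((‖b (k l)‖ / S : ℝ) : ℂ)‖ = ‖b (k l)‖ / S := by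
      rw [Complex.norm_real, Real.norm_of_nonneg (by positivity)]
    rw [h4]
    have h5 : ‖b (k l)‖ / S * (‖b n‖ / ‖b (k l)‖) = ‖b n‖ / S := by
      rw [div_mul_div_comm, mul_comm S (‖b (k l)‖), mul_div_mul_left _ _ hbkpos.ne']
    rw [h5]
    rw [div_lt_iff₀ hSpos]
    calc ‖b n‖ = δ * (‖b n‖ / δ) := by field_simp
      _ ≤ δ * (‖b n‖ / δ) := le_refl _
      _ < δ * S := by
          apply mul_lt_mul_of_pos_left hmS hδ
  have hchain := dchain_of_singles s w hB hs k γ hkrel hγε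
  have hγ0 : γ 0 = 0 := by
    show ((T 0 / S : ℝ) : ℂ) * _ = 0
    have : T 0 = 0 := by simp [hT]
    rw [this]
    simp
  have hkm : k m = n := by
    show s^[m - m] n = n
    simp
  have hγm : γ m = 1 := by
    have hTm : T m = S := by
      show ∑ j ∈ Finset.range m, ‖b (s^[m - 1 - j] n)‖ = S
      rw [hS]
      exact Finset.sum_range_reflect (fun j => ‖b (s^[j] n)‖) m
    show ((T m / S : ℝ) : ℂ) * (b n / b (k m)) = 1
    rw [hTm, div_self hSpos.ne', hkm, div_self (hb n)]
    simp
  rw [hγ0, hγm, hkm, zero_smul, one_smul] at hchain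
  exact ⟨m, hm1, hchain⟩

include hB in
lemma chain_single_to_zero (hs : Function.Injective s) (hrel : ∀ n, b (s n) = b n * w n)
    (hb : ∀ n, b n ≠ 0) (p : ι → ι) (hp : ∀ x, s (p x) = x) (n : ι)
    (hdiv : ∀ C : ℝ, ∃ m, 1 ≤ m ∧ C < ∑ j ∈ Finset.range m, ‖b (p^[j + 1] n)‖) :
    ∀ δ : ℝ, 0 < δ → ∃ m, 1 ≤ m ∧ DChain B δ (lp.single 2 n 1) 0 m := by
  intro δ hδ
  obtain ⟨m, hm1, hmS⟩ := hdiv (‖b n‖ / δ)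
  set S : ℝ := ∑ j ∈ Finset.range m, ‖b (p^[j + 1] n)‖ with hS
  have hSpos : 0 < S := lt_of_le_of_lt (by positivity) hmS
  set k : ℕ → ι := fun l => p^[l] n with hk
  set T : ℕ → ℝ := fun l => ∑ j ∈ Finset.range l, ‖b (p^[j + 1] n)‖ with hT
  set γ : ℕ → ℂ := fun l => (((S - T l) / S : ℝ) : ℂ) * (b n / b (k l)) with hγ
  have hkrel : ∀ l, 1 ≤ l → l ≤ m → s (k l) = k (l - 1) := by
    intro l h1 h2
    show s (p^[l] n) = p^[l - 1] n
    have h3 : l = (l - 1) + 1 := by omega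
    conv_lhs => rw [h3, Function.iterate_succ_apply' p, hp]
  have hγε : ∀ l, 1 ≤ l → l ≤ m → ‖γ l - γ (l - 1) * w (k l)‖ < δ := by
    intro l h1 h2
    have hbk : b (k l) ≠ 0 := hb _
    have hbkpos : (0:ℝ) < ‖b (k l)‖ := norm_pos_iff.mpr hbk
    have hwrel : b (k (l - 1)) = b (k l) * w (k l) := by
      rw [← hkrel l h1 h2]; exact hrel _
    have hwne : w (k l) ≠ 0 := by
      intro h; apply hb (k (l - 1)); rw [hwrel, h, mul_zero]
    have e1 : γ (l - 1) * w (k l) = (((S - T (l - 1)) / S : ℝ) : ℂ) * (b n / b (k l)) := by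
      show (((S - T (l-1)) / S : ℝ) : ℂ) * (b n / b (k (l-1))) * w (k l) = _
      rw [hwrel]
      rw [mul_assoc, div_mul_eq_mul_div, mul_comm (b n) (w (k l)),
        mul_comm (b (k l)) (w (k l)), mul_div_mul_left _ _ hwne]
    have e2 : T l = T (l - 1) + ‖b (k l)‖ := by
      show ∑ j ∈ Finset.range l, ‖b (p^[j + 1] n)‖ = _
      have h3 : l = (l - 1) + 1 := by omega
      rw [h3, Finset.sum_range_succ]
      rfl
    have e3 : γ l - γ (l - 1) * w (k l) = ((-(‖b (k l)‖) / S : ℝ) : ℂ) * (b n / b (k l)) := by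
      rw [e1]
      show (((S - T l) / S : ℝ) : ℂ) * (b n / b (k l)) - _ = _
      rw [e2]
      push_cast
      ring
    rw [e3, norm_mul, norm_div]
    have h4 : ‖((-(‖b (k l)‖) / S : ℝ) : ℂ)‖ = ‖b (k l)‖ / S := by
      rw [Complex.norm_real, Real.norm_eq_abs, abs_div, abs_neg, abs_of_nonneg (norm_nonneg _),
        abs_of_pos hSpos]
    rw [h4]
    have h5 : ‖b (k l)‖ / S * (‖b n‖ / ‖b (k l)‖) = ‖b n‖ / S := by
      rw [div_mul_div_comm, mul_comm S (‖b (k l)‖), mul_div_mul_left _ _ hbkpos.ne']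
    rw [h5, div_lt_iff₀ hSpos]
    calc ‖b n‖ = δ * (‖b n‖ / δ) := by field_simp
      _ < δ * S := mul_lt_mul_of_pos_left hmS hδ
  have hchain := dchain_of_singles s w hB hs k γ hkrel hγε
  have hγ0 : γ 0 = 1 := by
    have hT0 : T 0 = 0 := by simp [hT]
    show (((S - T 0) / S : ℝ) : ℂ) * (b n / b (k 0)) = 1
    rw [hT0, sub_zero, div_self hSpos.ne']
    show (((1:ℝ)) : ℂ) * (b n / b (p^[0] n)) = 1
    simp [div_self (hb n)]
  have hγm : γ m = 0 := by
    have hTm : T m = S := rfl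
    show (((S - T m) / S : ℝ) : ℂ) * _ = 0
    rw [hTm, sub_self, zero_div]
    simp
  have hk0 : k 0 = n := rfl
  rw [hγ0, hγm, hk0, zero_smul, one_smul] at hchain
  exact ⟨m, hm1, hchain⟩

end ShiftGeneric3

section Assembly
variable {ι : Type*} [DecidableEq ι]
variable {B : lp (fun _ : ι => ℂ) 2 →L[ℂ] lp (fun _ : ι => ℂ) 2}

lemma chainRecVec_all (hsingle : ∀ n : ι, ChainRecVec B (lp.single 2 n 1)) (f : lp (fun _ : ι => ℂ) 2) :
    ChainRecVec B f := by
  apply chainRecVec_closure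
  intro ε hε
  have hsum : HasSum (fun i : ι => lp.single 2 i (f i)) f :=
    lp.hasSum_single (by norm_num) f
  have h2 := Metric.tendsto_nhds.mp hsum ε hε
  obtain ⟨F, hF⟩ := h2.exists
  have hCRsum : ∀ G : Finset ι, ChainRecVec B (∑ i ∈ G, lp.single 2 i (f i)) := by
    intro G
    induction G using Finset.cons_induction with
    | empty => simpa using chainRecVec_zero
    | cons a G ha ih =>
        rw [Finset.sum_cons]
        refine chainRecVec_add ?_ ih
        rw [single_eq_smul]
        exact chainRecVec_smul _ (hsingle a)
  refine ⟨∑ i ∈ F, lp.single 2 i (f i), hCRsum F, ?_⟩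
  rw [← dist_eq_norm, dist_comm]
  exact hF

end Assembly

section Necessity
variable {ι : Type*} [DecidableEq ι] (s : ι → ι) (w b : ι → ℂ)
variable {B : lp (fun _ : ι => ℂ) 2 →L[ℂ] lp (fun _ : ι => ℂ) 2}
variable (hB : ∀ (f : lp (fun _ : ι => ℂ) 2) (n : ι), (B f) n = w n * f (s n))

lemma norm_triple (a c : ℂ) : ‖a‖ ≤ ‖a - c‖ + ‖c‖ := by
  simpa using norm_add_le (a - c) c

lemma norm_le_of_forall_le {x : ℂ} (h : ∀ ε : ℝ, 0 < ε → ‖x‖ ≤ ε) : x = 0 := by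
  by_contra hx
  have h1 : 0 < ‖x‖ := norm_pos_iff.mpr hx
  have := h (‖x‖ / 2) (by positivity)
  linarith

include hB in
lemma necessity_right (hrel : ∀ n, b (s n) = b n * w n) (hb : ∀ n, b n ≠ 0)
    (hsumn : ∀ n : ι, Summable (fun k : ℕ => ‖b (s^[k] n)‖))
    {f : lp (fun _ : ι => ℂ) 2} (hf : ChainRecVec B f) : f = 0 := by
  apply lp.ext
  funext n
  show f n = (0 : lp (fun _ : ι => ℂ) 2) n
  have hz : (0 : lp (fun _ : ι => ℂ) 2) n = 0 := rfl
  rw [hz]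
  have key : ∀ ε : ℝ, 0 < ε → ‖b n * f n‖ ≤ ε := by
    intro ε hε
    set g : ℕ → ℝ := fun k => ‖b (s^[k] n)‖ with hg
    have hgsum : Summable g := hsumn n
    set S : ℝ := ∑' k, g k with hS
    have hS0 : 0 ≤ S := tsum_nonneg (fun k => norm_nonneg _)
    have hδ : (0:ℝ) < ε / (2 * (S + 1)) := by positivity
    -- choose M with small tail terms
    have htend : Filter.Tendsto g Filter.atTop (nhds 0) := hgsum.tendsto_atTop_zero
    have hev : ∀ᶠ k in Filter.atTop, g k < ε / (2 * (‖f‖ + 1)) := by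
      have : (0:ℝ) < ε / (2 * (‖f‖ + 1)) := by positivity
      exact htend.eventually_lt_const this |>.mono (fun k hk => hk)
    obtain ⟨M, hM⟩ := hev.exists_forall_of_atTop
    obtain ⟨m, hmM, hm1, u, hu0, hum, hue⟩ := chainRecVec_large hf hδ M
    have hc := shift_coord s w b B hB hrel hue m le_rfl n
    rw [hu0, hum] at hc
    have hsum_le : ∑ i ∈ Finset.range m, ‖b (s^[i] n)‖ ≤ S :=
      Summable.sum_le_tsum _ (fun k _ => norm_nonneg _) hgsum
    have h1 : ‖b n * f n‖ ≤ ‖b n * f n - b (s^[m] n) * f (s^[m] n)‖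
        + ‖b (s^[m] n)‖ * ‖f (s^[m] n)‖ := by
      calc ‖b n * f n‖ ≤ ‖b n * f n - b (s^[m] n) * f (s^[m] n)‖ + ‖b (s^[m] n) * f (s^[m] n)‖ :=
            norm_triple _ _
        _ = _ := by rw [norm_mul]
    have h2 : ‖b (s^[m] n)‖ * ‖f (s^[m] n)‖ ≤ ε / 2 := by
      have hfc : ‖f (s^[m] n)‖ ≤ ‖f‖ := lp.norm_apply_le_norm (by norm_num) f _
      have hbm : ‖b (s^[m] n)‖ ≤ ε / (2 * (‖f‖ + 1)) := (hM m hmM).le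
      calc ‖b (s^[m] n)‖ * ‖f (s^[m] n)‖ ≤ (ε / (2 * (‖f‖ + 1))) * ‖f‖ := by
            apply mul_le_mul hbm hfc (norm_nonneg _) (by positivity)
        _ ≤ ε / 2 := by
            rw [div_mul_eq_mul_div, div_le_div_iff₀ (by positivity) (by norm_num)]
            nlinarith [norm_nonneg f]
    have h3 : ‖b n * f n - b (s^[m] n) * f (s^[m] n)‖ ≤ ε / 2 := by
      refine (hc.trans ?_)
      calc (ε / (2 * (S + 1))) * ∑ i ∈ Finset.range m, ‖b (s^[i] n)‖
          ≤ (ε / (2 * (S + 1))) * S := by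
            apply mul_le_mul_of_nonneg_left hsum_le hδ.le
        _ ≤ ε / 2 := by
            rw [div_mul_eq_mul_div, div_le_div_iff₀ (by positivity) (by norm_num)]
            nlinarith
    linarith
  have := norm_le_of_forall_le key
  rcases mul_eq_zero.mp this with h | h
  · exact absurd h (hb n)
  · exact h

include hB in
lemma necessity_left (hrel : ∀ n, b (s n) = b n * w n) (hb : ∀ n, b n ≠ 0)
    (p : ι → ι) (hp : ∀ x, s (p x) = x)
    (hsumn : ∀ n : ι, Summable (fun k : ℕ => ‖b (p^[k + 1] n)‖))
    {f : lp (fun _ : ι => ℂ) 2} (hf : ChainRecVec B f) : f = 0 := by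
  have hsp : ∀ (m : ℕ) (x : ι), s^[m] (p^[m] x) = x := by
    intro m
    induction m with
    | zero => intro x; rfl
    | succ m ih =>
        intro x
        rw [Function.iterate_succ_apply' p, Function.iterate_succ_apply s, hp]
        exact ih x
  apply lp.ext
  funext n
  show f n = (0 : lp (fun _ : ι => ℂ) 2) n
  have hz : (0 : lp (fun _ : ι => ℂ) 2) n = 0 := rfl
  rw [hz]
  have key : ∀ ε : ℝ, 0 < ε → ‖b n * f n‖ ≤ ε := by
    intro ε hε
    set g : ℕ → ℝ := fun k => ‖b (p^[k + 1] n)‖ with hg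
    have hgsum : Summable g := hsumn n
    set S : ℝ := ∑' k, g k with hS
    have hS0 : 0 ≤ S := tsum_nonneg (fun k => norm_nonneg _)
    have hδ : (0:ℝ) < ε / (2 * (S + 1)) := by positivity
    have htend : Filter.Tendsto g Filter.atTop (nhds 0) := hgsum.tendsto_atTop_zero
    have hev : ∀ᶠ k in Filter.atTop, g k < ε / (2 * (‖f‖ + 1)) := by
      have : (0:ℝ) < ε / (2 * (‖f‖ + 1)) := by positivity
      exact htend.eventually_lt_const this
    obtain ⟨M, hM⟩ := hev.exists_forall_of_atTop
    obtain ⟨m, hmM, hm1, u, hu0, hum, hue⟩ := chainRecVec_large hf hδ (M + 1)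
    have hc := shift_coord s w b B hB hrel hue m le_rfl (p^[m] n)
    rw [hu0, hum, hsp m n] at hc
    -- rewrite the sum over i of ‖b (s^[i] (p^[m] n))‖ as sum over j of ‖b (p^[j+1] n)‖
    have hsum_eq : ∑ i ∈ Finset.range m, ‖b (s^[i] (p^[m] n))‖
        = ∑ j ∈ Finset.range m, ‖b (p^[j + 1] n)‖ := by
      rw [← Finset.sum_range_reflect (fun j => ‖b (p^[j + 1] n)‖) m]
      apply Finset.sum_congr rfl
      intro i hi
      have hi' : i < m := Finset.mem_range.mp hi
      have e1 : m - 1 - i + 1 = m - i := by omega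
      rw [e1]
      congr 1
      have e2 : p^[m] n = p^[i] (p^[m - i] n) := by
        rw [← Function.iterate_add_apply]
        congr 1
        omega
      rw [e2, hsp i]
    rw [hsum_eq] at hc
    have hsum_le : ∑ j ∈ Finset.range m, ‖b (p^[j + 1] n)‖ ≤ S :=
      Summable.sum_le_tsum _ (fun k _ => norm_nonneg _) hgsum
    have h1 : ‖b n * f n‖ ≤ ‖b (p^[m] n) * f (p^[m] n) - b n * f n‖
        + ‖b (p^[m] n)‖ * ‖f (p^[m] n)‖ := by
      calc ‖b n * f n‖
          ≤ ‖b n * f n - b (p^[m] n) * f (p^[m] n)‖ + ‖b (p^[m] n) * f (p^[m] n)‖ :=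
            norm_triple _ _
        _ = _ := by rw [norm_sub_rev, norm_mul]
    have hbm : ‖b (p^[m] n)‖ = g (m - 1) := by
      have e : m - 1 + 1 = m := by omega
      show ‖b (p^[m] n)‖ = ‖b (p^[m - 1 + 1] n)‖
      rw [e]
    have h2 : ‖b (p^[m] n)‖ * ‖f (p^[m] n)‖ ≤ ε / 2 := by
      have hfc : ‖f (p^[m] n)‖ ≤ ‖f‖ := lp.norm_apply_le_norm (by norm_num) f _
      have hbm2 : ‖b (p^[m] n)‖ ≤ ε / (2 * (‖f‖ + 1)) := by
        rw [hbm]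
        exact (hM (m - 1) (by omega)).le
      calc ‖b (p^[m] n)‖ * ‖f (p^[m] n)‖ ≤ (ε / (2 * (‖f‖ + 1))) * ‖f‖ := by
            apply mul_le_mul hbm2 hfc (norm_nonneg _) (by positivity)
        _ ≤ ε / 2 := by
            rw [div_mul_eq_mul_div, div_le_div_iff₀ (by positivity) (by norm_num)]
            nlinarith [norm_nonneg f]
    have h3 : ‖b (p^[m] n) * f (p^[m] n) - b n * f n‖ ≤ ε / 2 := by
      refine (hc.trans ?_)
      calc (ε / (2 * (S + 1))) * ∑ j ∈ Finset.range m, ‖b (p^[j + 1] n)‖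
          ≤ (ε / (2 * (S + 1))) * S := by
            apply mul_le_mul_of_nonneg_left hsum_le hδ.le
        _ ≤ ε / 2 := by
            rw [div_mul_eq_mul_div, div_le_div_iff₀ (by positivity) (by norm_num)]
            nlinarith
    linarith
  have := norm_le_of_forall_le key
  rcases mul_eq_zero.mp this with h | h
  · exact absurd h (hb n)
  · exact h

end Necessity

section NatCase
variable (w b : ℕ → ℂ)
variable {B : lp (fun _ : ℕ => ℂ) 2 →L[ℂ] lp (fun _ : ℕ => ℂ) 2}
variable (hB : ∀ (f : lp (fun _ : ℕ => ℂ) 2) (n : ℕ), (B f) n = w n * f ((fun x => x + 1) n))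

lemma nat_succ_iter : ∀ (j k : ℕ), (fun x : ℕ => x + 1)^[j] k = k + j := by
  intro j
  induction j with
  | zero => intro k; simp
  | succ j ih =>
      intro k
      rw [Function.iterate_succ_apply' (fun x : ℕ => x + 1), ih k]
      omega

include hB in
lemma chain_single_to_zero_nat (hrel : ∀ n, b (n + 1) = b n * w n) (hb : ∀ n, b n ≠ 0) (n : ℕ)
    {δ : ℝ} (hδ : 0 < δ) : DChain B δ (lp.single 2 n 1) 0 (n + 1) := by
  have hs_inj : Function.Injective (fun x : ℕ => x + 1) := fun a b h => Nat.add_right_cancel h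
  -- first chain: from single n down to (b n / b 0) • single 0, exact orbit
  have hγε : ∀ l, 1 ≤ l → l ≤ n →
      ‖(fun l => b n / b (n - l)) l -
        (fun l => b n / b (n - l)) (l - 1) * w ((fun l => n - l) l)‖ < δ := by
    intro l h1 h2
    simp only []
    have e0 : n - (l - 1) = (n - l) + 1 := by omega
    rw [e0, hrel (n - l)]
    have hwne : w (n - l) ≠ 0 := by
      intro h
      apply hb ((n - l) + 1)
      rw [hrel (n - l), h, mul_zero]
    have hcan : b n / (b (n - l) * w (n - l)) * w (n - l) = b n / b (n - l) := by
      rw [div_mul_eq_mul_div, mul_comm (b n) (w (n - l)),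
        mul_comm (b (n - l)) (w (n - l)), mul_div_mul_left _ _ hwne]
    rw [hcan, sub_self, norm_zero]
    exact hδ
  have hkrel : ∀ l, 1 ≤ l → l ≤ n → (fun x : ℕ => x + 1) ((fun l => n - l) l) =
      (fun l => n - l) (l - 1) := by
    intro l h1 h2
    simp only []
    omega
  have hchain1 := dchain_of_singles (fun x : ℕ => x + 1) w hB hs_inj
    (fun l => n - l) (fun l => b n / b (n - l)) hkrel hγε
  -- endpoints
  have he0 : (b n / b (n - 0)) • (lp.single 2 (n - 0) 1 : lp (fun _ : ℕ => ℂ) 2)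
      = lp.single 2 n 1 := by
    rw [Nat.sub_zero, div_self (hb n), one_smul]
  have hen : n - n = 0 := Nat.sub_self n
  beta_reduce at hchain1
  rw [hen, Nat.sub_zero, div_self (hb n), one_smul] at hchain1
  -- second chain: one step from (b n / b 0) • single 0 to 0
  have hchain2 : DChain B δ ((b n / b 0) • lp.single 2 (0:ℕ) 1) 0 1 := by
    refine ⟨fun l => if l = 0 then (b n / b 0) • lp.single 2 (0:ℕ) 1 else 0,
      by simp, by simp, ?_⟩
    intro l hl1 hlm
    have hl : l = 1 := by omega
    subst hl
    show ‖(0 : lp (fun _ : ℕ => ℂ) 2) - B ((b n / b 0) • lp.single 2 (0:ℕ) 1)‖ < δ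
    have hkill : B ((b n / b 0) • lp.single 2 (0:ℕ) 1) = 0 :=
      B_single_kill (fun x : ℕ => x + 1) w B hB _ 0 (fun i => Nat.succ_ne_zero i)
    rw [hkill, sub_zero, norm_zero]
    exact hδ
  have := dchain_concat hchain1 hchain2
  exact this

include hB in
lemma nat_dichotomy (hrel : ∀ n, b (n + 1) = b n * w n) (hb : ∀ n, b n ≠ 0) :
    {f : lp (fun _ : ℕ => ℂ) 2 | ChainRecVec B f} = {0} ∨
      {f : lp (fun _ : ℕ => ℂ) 2 | ChainRecVec B f} = Set.univ := by
  have hs_inj : Function.Injective (fun x : ℕ => x + 1) := fun a b h => Nat.add_right_cancel h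
  by_cases hP : Summable (fun k : ℕ => ‖b k‖)
  · left
    apply Set.eq_singleton_iff_unique_mem.mpr
    refine ⟨chainRecVec_zero, fun f hf => ?_⟩
    refine necessity_right (fun x : ℕ => x + 1) w b hB hrel hb ?_ hf
    intro n
    refine ((summable_nat_add_iff n).mpr hP).congr (fun k => ?_)
    rw [nat_succ_iter k n, Nat.add_comm]
  · right
    apply Set.eq_univ_iff_forall.mpr
    intro f
    show ChainRecVec B f
    apply chainRecVec_all
    intro n
    apply chainRecVec_of_to_from_zero
    · intro δ hδ
      exact ⟨n + 1, by omega, chain_single_to_zero_nat w b hB hrel hb n hδ⟩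
    · refine chain_zero_to_single (fun x : ℕ => x + 1) w b hB hs_inj hrel hb n ?_
      intro C
      have h1 : ¬ Summable (fun k : ℕ => ‖b (n + k)‖) := by
        intro hs
        apply hP
        refine (summable_nat_add_iff n).mp (hs.congr (fun k => ?_))
        rw [Nat.add_comm]
      have h2 := (not_summable_iff_tendsto_nat_atTop_of_nonneg
        (fun k => norm_nonneg (b (n + k)))).mp h1
      obtain ⟨m, hm1, hm2⟩ := ((h2.eventually_gt_atTop C).and (Filter.eventually_ge_atTop 1)).exists
      refine ⟨m, hm2, ?_⟩
      calc C < ∑ i ∈ Finset.range m, ‖b (n + i)‖ := hm1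
        _ = ∑ j ∈ Finset.range m, ‖b ((fun x : ℕ => x + 1)^[j] n)‖ := by
            apply Finset.sum_congr rfl
            intro j _
            rw [nat_succ_iter j n]

end NatCase

section IntCase
variable (lam2 : ℤ → ℂ)

/-- the weight products over `ℤ`. -/
noncomputable def bz : ℤ → ℂ := fun k =>
  match k with
  | Int.ofNat n => ∏ i ∈ Finset.range n, lam2 (i + 1)
  | Int.negSucc n => (∏ i ∈ Finset.range (n + 1), lam2 (-(i : ℤ)))⁻¹

lemma bz_ne_zero (hne : ∀ n : ℤ, lam2 n ≠ 0) : ∀ k, bz lam2 k ≠ 0 := by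
  intro k
  match k with
  | Int.ofNat n =>
      exact Finset.prod_ne_zero_iff.mpr (fun i _ => hne _)
  | Int.negSucc n =>
      exact inv_ne_zero (Finset.prod_ne_zero_iff.mpr (fun i _ => hne _))

lemma bz_rel (hne : ∀ n : ℤ, lam2 n ≠ 0) :
    ∀ k : ℤ, bz lam2 (k + 1) = bz lam2 k * lam2 (k + 1) := by
  intro k
  match k with
  | Int.ofNat n =>
      have h1 : (Int.ofNat n) + 1 = Int.ofNat (n + 1) := rfl
      rw [h1]
      show ∏ i ∈ Finset.range (n + 1), lam2 (i + 1)
          = (∏ i ∈ Finset.range n, lam2 (i + 1)) * lam2 (Int.ofNat n + 1)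
      rw [Finset.prod_range_succ]
      rfl
  | Int.negSucc 0 =>
      have h1 : (Int.negSucc 0) + 1 = Int.ofNat 0 := rfl
      rw [h1]
      show (1 : ℂ) = (∏ i ∈ Finset.range 1, lam2 (-(i : ℤ)))⁻¹ * lam2 (Int.negSucc 0 + 1)
      rw [Finset.prod_range_one]
      have h2 : (-(0 : ℕ) : ℤ) = Int.negSucc 0 + 1 := rfl
      rw [h2, inv_mul_cancel₀ (hne _)]
  | Int.negSucc (n + 1) =>
      have h1 : (Int.negSucc (n + 1)) + 1 = Int.negSucc n := rfl
      rw [h1]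
      show (∏ i ∈ Finset.range (n + 1), lam2 (-(i : ℤ)))⁻¹
          = (∏ i ∈ Finset.range (n + 2), lam2 (-(i : ℤ)))⁻¹ * lam2 (Int.negSucc (n + 1) + 1)
      have h2 : (∏ i ∈ Finset.range (n + 2), lam2 (-(i : ℤ)))
          = (∏ i ∈ Finset.range (n + 1), lam2 (-(i : ℤ))) * lam2 (-(n + 1 : ℕ)) :=
        Finset.prod_range_succ _ _
      have h3 : (-(n + 1 : ℕ) : ℤ) = Int.negSucc (n + 1) + 1 := by
        rw [Int.negSucc_eq]
        push_cast
        ring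
      rw [h2, h3, mul_inv, mul_assoc, inv_mul_cancel₀ (hne _), mul_one]

lemma int_succ_iter : ∀ (j : ℕ) (k : ℤ), (fun x : ℤ => x + 1)^[j] k = k + j := by
  intro j
  induction j with
  | zero => intro k; simp
  | succ j ih =>
      intro k
      rw [Function.iterate_succ_apply' (fun x : ℤ => x + 1), ih k]
      push_cast
      ring

lemma int_pred_iter : ∀ (j : ℕ) (k : ℤ), (fun x : ℤ => x - 1)^[j] k = k - j := by
  intro j
  induction j with
  | zero => intro k; simp
  | succ j ih =>
      intro k
      rw [Function.iterate_succ_apply' (fun x : ℤ => x - 1), ih k]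
      push_cast
      ring

lemma summable_int_shift (g : ℤ → ℝ) (n n' : ℤ)
    (h : Summable fun k : ℕ => g (n + k)) : Summable fun k : ℕ => g (n' + k) := by
  rcases le_or_gt n n' with h' | h'
  · set d : ℕ := (n' - n).toNat with hd
    have hdd : (d : ℤ) = n' - n := Int.toNat_of_nonneg (by omega)
    refine ((summable_nat_add_iff d).mpr h).congr (fun k => ?_)
    congr 1
    push_cast
    omega
  · set d : ℕ := (n - n').toNat with hd
    have hdd : (d : ℤ) = n - n' := Int.toNat_of_nonneg (by omega)
    refine (summable_nat_add_iff d).mp (h.congr (fun k => ?_))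
    congr 1
    push_cast
    omega

end IntCase

section IntCase2
variable (lam2 : ℤ → ℂ)
variable {B : lp (fun _ : ℤ => ℂ) 2 →L[ℂ] lp (fun _ : ℤ => ℂ) 2}
variable (hB : ∀ (f : lp (fun _ : ℤ => ℂ) 2) (n : ℤ),
  (B f) n = lam2 (n + 1) * f ((fun x : ℤ => x + 1) n))

include hB in
lemma int_dichotomy (hne : ∀ n : ℤ, lam2 n ≠ 0) :
    {f : lp (fun _ : ℤ => ℂ) 2 | ChainRecVec B f} = {0} ∨
      {f : lp (fun _ : ℤ => ℂ) 2 | ChainRecVec B f} = Set.univ := by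
  by_cases h0 : ∀ f : lp (fun _ : ℤ => ℂ) 2, ChainRecVec B f → f = 0
  · left
    exact Set.eq_singleton_iff_unique_mem.mpr ⟨chainRecVec_zero, fun f hf => h0 f hf⟩
  · right
    have hs_inj : Function.Injective (fun x : ℤ => x + 1) := fun a b h => by
      have h' : a + 1 = b + 1 := h
      omega
    have hp : ∀ x : ℤ, (fun x : ℤ => x + 1) ((fun x : ℤ => x - 1) x) = x := fun x => by
      show x - 1 + 1 = x
      omega
    set w : ℤ → ℂ := fun k => lam2 (k + 1) with hwdef
    set b : ℤ → ℂ := bz lam2 with hbdef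
    have hb : ∀ k, b k ≠ 0 := bz_ne_zero lam2 hne
    have hrel : ∀ k : ℤ, b ((fun x : ℤ => x + 1) k) = b k * w k := fun k => bz_rel lam2 hne k
    push_neg at h0
    obtain ⟨f₀, hf₀, hf₀ne⟩ := h0
    -- right tail diverges
    have hNR : ¬ Summable (fun k : ℕ => ‖b ((0:ℤ) + k)‖) := by
      intro hs
      apply hf₀ne
      refine necessity_right (fun x : ℤ => x + 1) w b hB hrel hb ?_ hf₀
      intro n
      refine (summable_int_shift (fun j => ‖b j‖) 0 n hs).congr (fun k => ?_)
      rw [int_succ_iter k n]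
    -- left tail diverges
    have hNL : ¬ Summable (fun k : ℕ => ‖b (-1 - (0 + (k:ℤ)))‖) := by
      intro hs
      apply hf₀ne
      refine necessity_left (fun x : ℤ => x + 1) w b hB hrel hb (fun x : ℤ => x - 1) hp ?_ hf₀
      intro n
      have h1 := summable_int_shift (fun j => ‖b (-1 - j)‖) 0 (-n) hs
      refine h1.congr (fun k => ?_)
      show ‖b (-1 - (-n + (k:ℤ)))‖ = ‖b ((fun x : ℤ => x - 1)^[k + 1] n)‖
      rw [int_pred_iter (k + 1) n]
      have e : (-1 : ℤ) - (-n + (k:ℤ)) = n - ((k + 1 : ℕ) : ℤ) := by push_cast; ring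
      rw [e]
    have hdivR : ∀ (n : ℤ) (C : ℝ), ∃ m, 1 ≤ m ∧
        C < ∑ j ∈ Finset.range m, ‖b ((fun x : ℤ => x + 1)^[j] n)‖ := by
      intro n C
      have h1 : ¬ Summable (fun k : ℕ => ‖b (n + (k:ℤ))‖) := by
        intro hs
        exact hNR (summable_int_shift (fun j => ‖b j‖) n 0 hs)
      have h2 := (not_summable_iff_tendsto_nat_atTop_of_nonneg
        (fun k => norm_nonneg (b (n + (k:ℤ))))).mp h1
      obtain ⟨m, hm1, hm2⟩ :=
        ((h2.eventually_gt_atTop C).and (Filter.eventually_ge_atTop 1)).exists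
      refine ⟨m, hm2, ?_⟩
      calc C < ∑ i ∈ Finset.range m, ‖b (n + (i:ℤ))‖ := hm1
        _ = _ := by
            apply Finset.sum_congr rfl
            intro j _
            rw [int_succ_iter j n]
    have hdivL : ∀ (n : ℤ) (C : ℝ), ∃ m, 1 ≤ m ∧
        C < ∑ j ∈ Finset.range m, ‖b ((fun x : ℤ => x - 1)^[j + 1] n)‖ := by
      intro n C
      have h1 : ¬ Summable (fun k : ℕ => ‖b (-1 - ((-n) + (k:ℤ)))‖) := by
        intro hs
        exact hNL (summable_int_shift (fun j => ‖b (-1 - j)‖) (-n) 0 hs)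
      have h2 := (not_summable_iff_tendsto_nat_atTop_of_nonneg
        (fun k => norm_nonneg _)).mp h1
      obtain ⟨m, hm1, hm2⟩ :=
        ((h2.eventually_gt_atTop C).and (Filter.eventually_ge_atTop 1)).exists
      refine ⟨m, hm2, ?_⟩
      calc C < ∑ i ∈ Finset.range m, ‖b (-1 - ((-n) + (i:ℤ)))‖ := hm1
        _ = _ := by
            apply Finset.sum_congr rfl
            intro j _
            show ‖b (-1 - (-n + (j:ℤ)))‖ = ‖b ((fun x : ℤ => x - 1)^[j + 1] n)‖
            rw [int_pred_iter (j + 1) n]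
            have e : (-1 : ℤ) - (-n + (j:ℤ)) = n - ((j + 1 : ℕ) : ℤ) := by push_cast; ring
            rw [e]
    apply Set.eq_univ_iff_forall.mpr
    intro f
    show ChainRecVec B f
    apply chainRecVec_all
    intro n
    apply chainRecVec_of_to_from_zero
    · exact chain_single_to_zero (fun x : ℤ => x + 1) w b hB hs_inj hrel hb
        (fun x : ℤ => x - 1) hp n (hdivL n)
    · exact chain_zero_to_single (fun x : ℤ => x + 1) w b hB hs_inj hrel hb n (hdivR n)

end IntCase2

lemma restriction_eq {X : Type*} [NormedAddCommGroup X] [NormedSpace ℂ X] (T : X →L[ℂ] X)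
    (hdi : {f : X | ChainRecVec T f} = {0} ∨ {f : X | ChainRecVec T f} = Set.univ) :
    {f : X | ChainRecVec T f ∧ RelChainRecVec T {g : X | ChainRecVec T g} f} =
      {f : X | ChainRecVec T f} := by
  ext f
  simp only [Set.mem_setOf_eq]
  constructor
  · exact fun h => h.1
  · intro hf
    refine ⟨hf, ?_⟩
    rcases hdi with h | h
    · have hf0 : f = 0 := by
        have hmem : f ∈ {f : X | ChainRecVec T f} := hf
        rw [h] at hmem
        simpa using hmem
      subst hf0
      intro δ hδ
      refine ⟨1, fun _ => 0, le_refl 1, ?_, rfl, rfl, ?_⟩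
      · intro l _
        exact chainRecVec_zero
      · intro l _ _
        simpa using hδ
    · intro δ hδ
      obtain ⟨m, u, hm, hu0, hum, hue⟩ := hf δ hδ
      refine ⟨m, u, hm, ?_, hu0, hum, hue⟩
      intro l _
      have hmem : u l ∈ Set.univ := Set.mem_univ _
      rw [← h] at hmem
      exact hmem

theorem stmt_16
    -- the unilateral case, V = ℕ
    (lam1 : ℕ → ℂ) (hne1 : ∀ n, 1 ≤ n → lam1 n ≠ 0) (hbdd1 : ∃ C : ℝ, ∀ n, ‖lam1 n‖ ≤ C)
    (B1 : lp (fun _ : ℕ => ℂ) 2 →L[ℂ] lp (fun _ : ℕ => ℂ) 2)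
    (hB1 : ∀ (f : lp (fun _ : ℕ => ℂ) 2) (n : ℕ), (B1 f) n = lam1 (n + 1) * f (n + 1))
    -- the bilateral case, V = ℤ
    (lam2 : ℤ → ℂ) (hne2 : ∀ n : ℤ, lam2 n ≠ 0) (hbdd2 : ∃ C : ℝ, ∀ n : ℤ, ‖lam2 n‖ ≤ C)
    (B2 : lp (fun _ : ℤ => ℂ) 2 →L[ℂ] lp (fun _ : ℤ => ℂ) 2)
    (hB2 : ∀ (f : lp (fun _ : ℤ => ℂ) 2) (n : ℤ), (B2 f) n = lam2 (n + 1) * f (n + 1)) :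
    -- CR(B) is {0} or everything
    ({f : lp (fun _ : ℕ => ℂ) 2 | ChainRecVec B1 f} = {0} ∨
      {f : lp (fun _ : ℕ => ℂ) 2 | ChainRecVec B1 f} = Set.univ) ∧
    ({f : lp (fun _ : ℤ => ℂ) 2 | ChainRecVec B2 f} = {0} ∨
      {f : lp (fun _ : ℤ => ℂ) 2 | ChainRecVec B2 f} = Set.univ) ∧
    -- CR of the restriction of B to CR(B) is all of CR(B), i.e. the restriction is chain recurrent
    {f : lp (fun _ : ℕ => ℂ) 2 | ChainRecVec B1 f ∧
        RelChainRecVec B1 {g : lp (fun _ : ℕ => ℂ) 2 | ChainRecVec B1 g} f} =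
      {f : lp (fun _ : ℕ => ℂ) 2 | ChainRecVec B1 f} ∧
    {f : lp (fun _ : ℤ => ℂ) 2 | ChainRecVec B2 f ∧
        RelChainRecVec B2 {g : lp (fun _ : ℤ => ℂ) 2 | ChainRecVec B2 g} f} =
      {f : lp (fun _ : ℤ => ℂ) 2 | ChainRecVec B2 f} := by
  have hB1' : ∀ (f : lp (fun _ : ℕ => ℂ) 2) (n : ℕ),
      (B1 f) n = (fun k => lam1 (k + 1)) n * f ((fun x : ℕ => x + 1) n) := fun f n => hB1 f n
  have hB2' : ∀ (f : lp (fun _ : ℤ => ℂ) 2) (n : ℤ),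
      (B2 f) n = lam2 (n + 1) * f ((fun x : ℤ => x + 1) n) := fun f n => hB2 f n
  have hb1 : ∀ k : ℕ, (fun k => ∏ i ∈ Finset.range k, lam1 (i + 1)) k ≠ 0 := by
    intro k
    exact Finset.prod_ne_zero_iff.mpr (fun i _ => hne1 (i + 1) (by omega))
  have hrel1 : ∀ k : ℕ, (fun k => ∏ i ∈ Finset.range k, lam1 (i + 1)) (k + 1)
      = (fun k => ∏ i ∈ Finset.range k, lam1 (i + 1)) k * (fun k => lam1 (k + 1)) k := by
    intro k
    exact Finset.prod_range_succ _ _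
  have d1 := nat_dichotomy (fun k => lam1 (k + 1))
    (fun k => ∏ i ∈ Finset.range k, lam1 (i + 1)) hB1' hrel1 hb1
  have d2 := int_dichotomy lam2 hB2' hne2
  exact ⟨d1, d2, restriction_eq B1 d1, restriction_eq B2 d2⟩
end

section
/- Let $B_{\boldsymbol{\lambda}}$ be a unilateral weighted backward shift on $\ell^2(\mathbb{N})$ with bounded weights, where $\lambda_{n_0} = 0$ for some $n_0$. Then the closed subspaces $Y^-_{n_0} = \overline{\operatorname{span}}\{e_n : n < n_0\}$ and $Y^+_{n_0} = \overline{\operatorname{span}}\{e_n : n \ge n_0\}$ are both invariant under $B_{\boldsymbol{\lambda}}$, and every chain recurrent vector of $B_{\boldsymbol{\lambda}}$ belongs to $Y^+_{n_0}$. -/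
open scoped ENNReal

/-- The canonical unit vectors of `ℓ²(ℕ)`. -/
noncomputable def eN (n : ℕ) : lp (fun _ : ℕ => ℂ) 2 := lp.single 2 n 1

/-- Evaluation at the n-th coordinate as a continuous linear map. -/
noncomputable def coordCLM (n : ℕ) : lp (fun _ : ℕ => ℂ) 2 →L[ℂ] ℂ :=
  LinearMap.mkContinuous
    { toFun := fun f => f n
      map_add' := fun f g => rfl
      map_smul' := fun c f => rfl }
    1 (fun f => by change ‖(f : ℕ → ℂ) n‖ ≤ 1 * ‖f‖; simpa using lp.norm_apply_le_norm (by norm_num : (2:ℝ≥0∞) ≠ 0) f n)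

lemma mem_closure_span_iff (S : Set ℕ) (f : lp (fun _ : ℕ => ℂ) 2) :
    f ∈ closure (SetLike.coe (Submodule.span ℂ (eN '' S))) ↔ ∀ n ∉ S, f n = 0 := by
  constructor
  · intro hf n hn
    have hker : (Submodule.span ℂ (eN '' S) : Set (lp (fun _ : ℕ => ℂ) 2))
        ⊆ (((coordCLM n).ker : Submodule ℂ (lp (fun _ : ℕ => ℂ) 2)) : Set (lp (fun _ : ℕ => ℂ) 2)) := by
      rw [SetLike.coe_subset_coe, Submodule.span_le]
      rintro _ ⟨k, hk, rfl⟩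
      simp only [SetLike.mem_coe, LinearMap.mem_ker]
      show (eN k : ℕ → ℂ) n = 0
      exact lp.single_apply_ne 2 k 1 (fun h => hn (h ▸ hk))
    have hcl : IsClosed (((coordCLM n).ker : Submodule ℂ (lp (fun _ : ℕ => ℂ) 2)) : Set (lp (fun _ : ℕ => ℂ) 2)) :=
      ContinuousLinearMap.isClosed_ker (coordCLM n)
    exact closure_minimal hker hcl hf
  · intro hf
    have hs : HasSum (fun i : ℕ => lp.single 2 i (f i)) f :=
      lp.hasSum_single (by norm_num) f
    refine mem_closure_of_tendsto hs (Filter.Eventually.of_forall fun s => ?_)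
    refine Submodule.sum_mem _ fun i _ => ?_
    by_cases hi : i ∈ S
    · have : lp.single 2 i (f i) = f i • eN i := by
        rw [eN, ← lp.single_smul, smul_eq_mul, mul_one]
      rw [this]
      exact Submodule.smul_mem _ _ (Submodule.subset_span ⟨i, hi, rfl⟩)
    · have h0 : (lp.single 2 i (f i) : lp (fun _ : ℕ => ℂ) 2) = 0 := by
        rw [show (f i : ℂ) = (0:ℂ) • (1:ℂ) by simp [hf i hi], lp.single_smul, zero_smul]
      rw [h0]; exact Submodule.zero_mem _

lemma coord_sub (f g : lp (fun _ : ℕ => ℂ) 2) (k : ℕ) :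
    ((f - g : lp (fun _ : ℕ => ℂ) 2) : ℕ → ℂ) k = f k - g k := by
  simp [lp.coeFn_sub]

lemma key_estimate (lam : ℕ → ℂ) (C : ℝ) (hC1 : 1 ≤ C) (hCb : ∀ n, ‖lam n‖ ≤ C)
    (n0 : ℕ) (hzero : lam n0 = 0)
    (B : lp (fun _ : ℕ => ℂ) 2 →L[ℂ] lp (fun _ : ℕ => ℂ) 2)
    (hB : ∀ (f : lp (fun _ : ℕ => ℂ) 2) (n : ℕ), (B f) n = lam (n + 1) * f (n + 1))
    (δ : ℝ) (m : ℕ) (u : ℕ → lp (fun _ : ℕ => ℂ) 2)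
    (hu : ∀ l, 1 ≤ l → l ≤ m → ‖u l - B (u (l - 1))‖ < δ) :
    ∀ j, 1 ≤ j → ∀ l k, j ≤ l → l ≤ m → k + j = n0 → ‖(u l : ℕ → ℂ) k‖ ≤ δ * (j * C ^ j) := by
  intro j hj
  induction j, hj using Nat.le_induction with
  | base =>
    intro l k hl hlm hk
    have h1 := hu l hl hlm
    have hδ : 0 < δ := lt_of_le_of_lt (norm_nonneg _) h1
    have h2 : ‖((u l - B (u (l-1)) : lp (fun _ : ℕ => ℂ) 2) : ℕ → ℂ) k‖ ≤
        ‖u l - B (u (l-1))‖ := lp.norm_apply_le_norm (by norm_num) _ k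
    have h3 : ((u l - B (u (l-1)) : lp (fun _ : ℕ => ℂ) 2) : ℕ → ℂ) k
        = (u l : ℕ → ℂ) k := by
      rw [coord_sub, hB, show k + 1 = n0 by omega, hzero, zero_mul, sub_zero]
    rw [h3] at h2
    have h6 := lt_of_le_of_lt h2 h1
    have : δ ≤ δ * (1 * C ^ 1) := by nlinarith
    push_cast
    linarith
  | succ j hj ih =>
    intro l k hl hlm hk
    have h1 := hu l (by omega) hlm
    have hδ : 0 < δ := lt_of_le_of_lt (norm_nonneg _) h1
    have h2 : ‖((u l - B (u (l-1)) : lp (fun _ : ℕ => ℂ) 2) : ℕ → ℂ) k‖ ≤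
        ‖u l - B (u (l-1))‖ := lp.norm_apply_le_norm (by norm_num) _ k
    have h3 : ((u l - B (u (l-1)) : lp (fun _ : ℕ => ℂ) 2) : ℕ → ℂ) k
        = (u l : ℕ → ℂ) k - lam (k+1) * (u (l-1) : ℕ → ℂ) (k+1) := by
      rw [coord_sub, hB]
    have hprev : ‖(u (l-1) : ℕ → ℂ) (k+1)‖ ≤ δ * (j * C ^ j) :=
      ih (l-1) (k+1) (by omega) (by omega) (by omega)
    have h4 : ‖(u l : ℕ → ℂ) k‖ ≤
        ‖(u l : ℕ → ℂ) k - lam (k+1) * (u (l-1) : ℕ → ℂ) (k+1)‖ +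
        ‖lam (k+1)‖ * ‖(u (l-1) : ℕ → ℂ) (k+1)‖ := by
      have h := norm_add_le ((u l : ℕ → ℂ) k - lam (k+1) * (u (l-1) : ℕ → ℂ) (k+1))
        (lam (k+1) * (u (l-1) : ℕ → ℂ) (k+1))
      rw [sub_add_cancel, norm_mul] at h
      exact h
    have h5 : ‖(u l : ℕ → ℂ) k - lam (k+1) * (u (l-1) : ℕ → ℂ) (k+1)‖ < δ := by
      rw [← h3]; exact lt_of_le_of_lt h2 h1
    have hlamb := hCb (k+1)
    have hC0 : (0:ℝ) < C := lt_of_lt_of_le zero_lt_one hC1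
    have hCj : (1:ℝ) ≤ C ^ j := one_le_pow₀ hC1
    have hCj1 : (1:ℝ) ≤ C ^ (j+1) := one_le_pow₀ hC1
    have hmul : ‖lam (k+1)‖ * ‖(u (l-1) : ℕ → ℂ) (k+1)‖ ≤ C * (δ * (j * C ^ j)) :=
      mul_le_mul hlamb hprev (norm_nonneg _) hC0.le
    push_cast
    have e1 : δ * ((↑j + 1) * C ^ (j+1)) = C * (δ * (↑j * C ^ j)) + δ * C ^ (j+1) := by
      rw [pow_succ]; ring
    have e2 : δ ≤ δ * C ^ (j+1) := le_mul_of_one_le_right hδ.le hCj1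
    linarith

theorem stmt_17 (lam : ℕ → ℂ) (hbdd : ∃ C : ℝ, ∀ n, ‖lam n‖ ≤ C)
    (n0 : ℕ) (hn0 : 2 ≤ n0) (hzero : lam n0 = 0)
    (B : lp (fun _ : ℕ => ℂ) 2 →L[ℂ] lp (fun _ : ℕ => ℂ) 2)
    (hB : ∀ (f : lp (fun _ : ℕ => ℂ) 2) (n : ℕ), (B f) n = lam (n + 1) * f (n + 1)) :
    (∀ f ∈ closure (SetLike.coe (Submodule.span ℂ (eN '' {n | n < n0}))),
      B f ∈ closure (SetLike.coe (Submodule.span ℂ (eN '' {n | n < n0})))) ∧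
    (∀ f ∈ closure (SetLike.coe (Submodule.span ℂ (eN '' {n | n0 ≤ n}))),
      B f ∈ closure (SetLike.coe (Submodule.span ℂ (eN '' {n | n0 ≤ n})))) ∧
    ∀ f : lp (fun _ : ℕ => ℂ) 2, ChainRecVec B f →
      f ∈ closure (SetLike.coe (Submodule.span ℂ (eN '' {n | n0 ≤ n}))) := by
  refine ⟨?_, ?_, ?_⟩
  · intro f hf
    rw [mem_closure_span_iff] at hf ⊢
    intro n hn
    simp only [Set.mem_setOf_eq, not_lt] at hn
    rw [hB]
    have : (f : ℕ → ℂ) (n+1) = 0 := hf (n+1) (by simp only [Set.mem_setOf_eq, not_lt]; omega)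
    rw [this, mul_zero]
  · intro f hf
    rw [mem_closure_span_iff] at hf ⊢
    intro n hn
    simp only [Set.mem_setOf_eq, not_le] at hn
    rw [hB]
    by_cases h : n + 1 = n0
    · rw [h, hzero, zero_mul]
    · have : (f : ℕ → ℂ) (n+1) = 0 := hf (n+1) (by simp only [Set.mem_setOf_eq, not_le]; omega)
      rw [this, mul_zero]
  · intro f hcr
    rw [mem_closure_span_iff]
    intro k hk
    simp only [Set.mem_setOf_eq, not_le] at hk
    obtain ⟨C₀, hC₀⟩ := hbdd
    set C : ℝ := max C₀ 1 with hCdef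
    have hC1 : (1:ℝ) ≤ C := le_max_right _ _
    have hCb : ∀ n, ‖lam n‖ ≤ C := fun n => (hC₀ n).trans (le_max_left _ _)
    set j : ℕ := n0 - k with hjdef
    have hj1 : 1 ≤ j := by omega
    have hkj : k + j = n0 := by omega
    set A : ℝ := (j : ℝ) * C ^ j with hAdef
    have hA : 0 < A := by
      apply mul_pos
      · exact_mod_cast Nat.pos_of_ne_zero (by omega)
      · exact pow_pos (lt_of_lt_of_le zero_lt_one hC1) j
    have key : ∀ ε : ℝ, 0 < ε → ‖(f : ℕ → ℂ) k‖ ≤ 0 + ε := by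
      intro ε hε
      set δ : ℝ := ε / A with hδdef
      have hδ : 0 < δ := div_pos hε hA
      obtain ⟨m, u, hm, h0, hmf, hu⟩ := hcr δ hδ
      -- the concatenated chain
      set v : ℕ → lp (fun _ : ℕ => ℂ) 2 := fun l => u (l % m) with hvdef
      have hv : ∀ l, 1 ≤ l → l ≤ j * m → ‖v l - B (v (l - 1))‖ < δ := by
        intro l hl _
        rcases Nat.eq_zero_or_pos (l % m) with hr | hr
        · -- l is a positive multiple of m
          obtain ⟨q, hq⟩ := Nat.dvd_of_mod_eq_zero hr
          rcases Nat.eq_zero_or_pos q with h | h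
          · rw [h, Nat.mul_zero] at hq; omega
          obtain ⟨q', rfl⟩ : ∃ q', q = q' + 1 := ⟨q - 1, by omega⟩
          have hq2 : l = m * q' + m := by rw [hq]; ring
          have hl1 : l - 1 = m * q' + (m - 1) := by omega
          have hmod : (l - 1) % m = m - 1 := by
            rw [hl1, Nat.mul_add_mod, Nat.mod_eq_of_lt (by omega)]
          have hvl : v l = u m := by
            rw [hvdef]; simp only []
            rw [hr, h0, ← hmf]
          rw [hvdef]
          simp only []
          rw [hr, hmod, h0, ← hmf]
          exact hu m hm le_rfl
        · have hd := Nat.div_add_mod l m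
          have hrm : l % m < m := Nat.mod_lt _ (by omega)
          have hl1 : l - 1 = m * (l / m) + (l % m - 1) := by omega
          have hmod : (l - 1) % m = l % m - 1 := by
            rw [hl1, Nat.mul_add_mod, Nat.mod_eq_of_lt (by omega)]
          rw [hvdef]
          simp only []
          rw [hmod]
          exact hu (l % m) hr (le_of_lt (Nat.mod_lt _ (by omega)))
      have hest := key_estimate lam C hC1 hCb n0 hzero B hB δ (j * m) v hv j hj1 (j * m) k
        (Nat.le_mul_of_pos_right j (by omega)) le_rfl hkj
      have hvjm : v (j * m) = f := by
        rw [hvdef]; simp only []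
        rw [Nat.mul_mod_left, h0]
      rw [hvjm] at hest
      have : δ * ((j:ℝ) * C ^ j) = ε := by
        rw [hδdef, hAdef] at *
        field_simp
      linarith
    have hle : ‖(f : ℕ → ℂ) k‖ ≤ 0 := le_of_forall_pos_le_add key
    exact norm_eq_zero.mp (le_antisymm hle (norm_nonneg _))
end

section
/- Let $B_{\boldsymbol{\lambda}}$ be a unilateral weighted backward shift on $\ell^2(\mathbb{N})$ with bounded weights such that the set $J = \{ n : \lambda_n = 0 \}$ is infinite. Then the only chain recurrent vector of $B_{\boldsymbol{\lambda}}$ is the zero vector: $CR(B_{\boldsymbol{\lambda}}) = \{0\}$. -/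
open scoped ENNReal

/-- Chains from `f` to `f` can be made arbitrarily long by concatenation. -/
lemma long_chain {X : Type*} [NormedAddCommGroup X] [NormedSpace ℂ X]
    (T : X →L[ℂ] X) (δ : ℝ) (f : X) (h : IsDeltaChain T δ f f) (N : ℕ) :
    ∃ (m : ℕ) (u : ℕ → X), N ≤ m ∧ 1 ≤ m ∧ u 0 = f ∧ u m = f ∧
      ∀ l, 1 ≤ l → l ≤ m → ‖u l - T (u (l - 1))‖ < δ := by
  obtain ⟨m0, u0, hm0, h00, h0m, h0c⟩ := h
  induction N with
  | zero => exact ⟨m0, u0, Nat.zero_le _, hm0, h00, h0m, h0c⟩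
  | succ k ih =>
    obtain ⟨m, u, hNm, hm1, hu0, hum, huc⟩ := ih
    refine ⟨m + m0, fun l => if l ≤ m then u l else u0 (l - m), by omega, by omega,
      by simp [hu0], ?_, ?_⟩
    · have : ¬ (m + m0 ≤ m) := by omega
      simp [this, h0m]
    · intro l hl1 hl2
      by_cases hc : l ≤ m
      · have h1 : l - 1 ≤ m := by omega
        simpa [hc, h1] using huc l hl1 hc
      · by_cases hc2 : l = m + 1
        · have h1 : l - 1 ≤ m := by omega
          have : l - m = 1 := by omega
          simp only [hc, h1, if_true, if_false, this, hc2]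
          have := h0c 1 le_rfl hm0
          simpa [hum, hu0, h00] using this
        · have h1 : ¬ (l - 1 ≤ m) := by omega
          have h2 : l - 1 - m = l - m - 1 := by omega
          simp only [hc, h1, if_false, h2]
          exact h0c (l - m) (by omega) (by omega)

theorem stmt_18 (lam : ℕ → ℂ) (hbdd : ∃ C : ℝ, ∀ n, ‖lam n‖ ≤ C)
    (hJ : {n : ℕ | lam n = 0}.Infinite)
    (B : lp (fun _ : ℕ => ℂ) 2 →L[ℂ] lp (fun _ : ℕ => ℂ) 2)
    (hB : ∀ (f : lp (fun _ : ℕ => ℂ) 2) (n : ℕ), (B f) n = lam (n + 1) * f (n + 1)) :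
    {f : lp (fun _ : ℕ => ℂ) 2 | ChainRecVec B f} = {0} := by
  obtain ⟨C0, hC0⟩ := hbdd
  set C : ℝ := max C0 1 with hC
  have hC1 : 1 ≤ C := le_max_right _ _
  have hC0' : ∀ n, ‖lam n‖ ≤ C := fun n => (hC0 n).trans (le_max_left _ _)
  ext f
  simp only [Set.mem_setOf_eq, Set.mem_singleton_iff]
  constructor
  · intro hf
    -- key coordinate estimate
    -- For each n, pick q > n with lam q = 0.
    have key : ∀ n : ℕ, f n = 0 := by
      intro n
      obtain ⟨q, hq0, hqn⟩ := hJ.exists_gt n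
      set j : ℕ := q - 1 - n with hj
      set K : ℝ := (j + 1) * C ^ j with hK
      have hKpos : 0 < K := by positivity
      -- for every δ > 0, ‖f n‖ ≤ δ * K
      have hbound : ∀ δ : ℝ, 0 < δ → ‖f n‖ ≤ δ * K := by
        intro δ hδ
        obtain ⟨M, u, hNM, hM1, hu0, huM, huc⟩ := long_chain B δ f (hf δ hδ) q
        -- inductive estimate
        have est : ∀ s : ℕ, s ≤ q - 1 →
            ∀ l, s + 1 ≤ l → l ≤ M → ‖(u l : ∀ _ : ℕ, ℂ) (q - 1 - s)‖ ≤ δ * ((s + 1) * C ^ s) := by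
          intro s
          induction s with
          | zero =>
            intro _ l hl1 hlM
            have hnear := huc l hl1 hlM
            have hcoord : ‖(u l : ∀ _ : ℕ, ℂ) (q - 1) - (B (u (l - 1)) : ∀ _ : ℕ, ℂ) (q - 1)‖
                ≤ ‖u l - B (u (l - 1))‖ := by
              have := lp.norm_apply_le_norm (by norm_num : (2 : ℝ≥0∞) ≠ 0)
                (u l - B (u (l - 1))) (q - 1)
              simpa using this
            have hz : (B (u (l - 1)) : ∀ _ : ℕ, ℂ) (q - 1) = 0 := by
              rw [hB]
              have : q - 1 + 1 = q := by omega
              rw [this, hq0, zero_mul]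
            have h1 : ‖(u l : ∀ _ : ℕ, ℂ) (q - 1)‖ ≤ δ := by
              calc ‖(u l : ∀ _ : ℕ, ℂ) (q - 1)‖
                  = ‖(u l : ∀ _ : ℕ, ℂ) (q - 1) - (B (u (l - 1)) : ∀ _ : ℕ, ℂ) (q - 1)‖ := by
                    rw [hz]; simp
                _ ≤ ‖u l - B (u (l - 1))‖ := hcoord
                _ ≤ δ := hnear.le
            simpa using h1
          | succ s ih =>
            intro hs l hl1 hlM
            have hl1' : 1 ≤ l := by omega
            have hnear := huc l hl1' hlM
            have hcoord : ‖(u l : ∀ _ : ℕ, ℂ) (q - 1 - (s + 1))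
                - (B (u (l - 1)) : ∀ _ : ℕ, ℂ) (q - 1 - (s + 1))‖
                ≤ ‖u l - B (u (l - 1))‖ := by
              have := lp.norm_apply_le_norm (by norm_num : (2 : ℝ≥0∞) ≠ 0)
                (u l - B (u (l - 1))) (q - 1 - (s + 1))
              simpa using this
            have hBval : (B (u (l - 1)) : ∀ _ : ℕ, ℂ) (q - 1 - (s + 1))
                = lam (q - 1 - s) * (u (l - 1) : ∀ _ : ℕ, ℂ) (q - 1 - s) := by
              rw [hB]
              have : q - 1 - (s + 1) + 1 = q - 1 - s := by omega
              rw [this]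
            have hih := ih (by omega) (l - 1) (by omega) (by omega)
            calc ‖(u l : ∀ _ : ℕ, ℂ) (q - 1 - (s + 1))‖
                ≤ ‖(u l : ∀ _ : ℕ, ℂ) (q - 1 - (s + 1))
                    - (B (u (l - 1)) : ∀ _ : ℕ, ℂ) (q - 1 - (s + 1))‖
                  + ‖(B (u (l - 1)) : ∀ _ : ℕ, ℂ) (q - 1 - (s + 1))‖ := by
                  simpa using norm_add_le
                    ((u l : ∀ _ : ℕ, ℂ) (q - 1 - (s + 1))
                      - (B (u (l - 1)) : ∀ _ : ℕ, ℂ) (q - 1 - (s + 1)))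
                    ((B (u (l - 1)) : ∀ _ : ℕ, ℂ) (q - 1 - (s + 1)))
              _ ≤ δ + C * (δ * ((s + 1) * C ^ s)) := by
                  gcongr
                  · exact hcoord.trans hnear.le
                  · rw [hBval, norm_mul]
                    exact mul_le_mul (hC0' _) hih (norm_nonneg _) (by linarith)
              _ = δ * 1 + δ * (((s : ℝ) + 1) * C ^ (s + 1)) := by ring
              _ ≤ δ * C ^ (s + 1) + δ * (((s : ℝ) + 1) * C ^ (s + 1)) := by
                  have h1 : (1 : ℝ) ≤ C ^ (s + 1) := one_le_pow₀ hC1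
                  gcongr
              _ = δ * (((s + 1 : ℕ) : ℝ) + 1) * C ^ (s + 1) := by push_cast; ring
              _ = δ * ((((s + 1 : ℕ) : ℝ) + 1) * C ^ (s + 1)) := by ring
        have hj' : j ≤ q - 1 := by omega
        have hfinal := est j hj' M (by omega) le_rfl
        have hcoordn : q - 1 - j = n := by omega
        rw [hcoordn, huM] at hfinal
        calc ‖f n‖ ≤ δ * (((j : ℝ) + 1) * C ^ j) := by exact_mod_cast hfinal
          _ = δ * K := by rw [hK]
      -- conclude f n = 0
      have : ‖f n‖ ≤ 0 := by
        by_contra h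
        push_neg at h
        have hδ : 0 < ‖f n‖ / (2 * K) := by positivity
        have := hbound _ hδ
        have heq : ‖f n‖ / (2 * K) * K = ‖f n‖ / 2 := by
          field_simp
        rw [heq] at this
        linarith
      simpa using norm_le_zero_iff.mp this
    apply lp.ext
    funext n
    simpa using key n
  · rintro rfl
    intro δ hδ
    exact ⟨1, fun _ => 0, le_rfl, rfl, rfl, fun l _ _ => by simpa using hδ⟩
end
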